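/- Let B be a commutative ring in which 6 is invertible, and let A be the free B-module with basis {1, t, v₁, v₂, w₁, w₂}, equipped with the S₃-action described in the context. Suppose A carries a commutative B-bilinear multiplication with unit 1 such that every element of S₃ acts as a ring automorphism (associativity is not assumed). Then there exist a, b₁, b₂, c₁, c₂, d₁, d₃, d₄, e₁, e₃, e₄, f₁, f₃, f₄, h₂, h₃, h₄ ∈ B such that: t² = a·1; t·v₁ = b₁v₁ + b₂v₂ − 2b₁w₁ − 2b₂w₂; t·v₂ = c₁v₁ + c₂v₂ − 2c₁w₁ − 2c₂w₂; t·w₁ = 2b₁v₁ + 2b₂v₂ − b₁w₁ − b₂w₂; t·w₂ = 2c₁v₁ + 2c₂v₂ − c₁w₁ − c₂w₂; v₁² = d₁·1 + d₃v₁ + d₄v₂ − 2d₃w₁ − 2d₄w₂; v₁v₂ = e₁·1 + e₃v₁ + e₄v₂ − 2e₃w₁ − 2e₄w₂; v₂² = f₁·1 + f₃v₁ + f₄v₂ − 2f₃w₁ − 2f₄w₂; v₁w₁ = (1/2)d₁·1 − d₃v₁ − d₄v₂ − d₃w₁ − d₄w₂; v₁w₂ = (1/2)e₁·1 + h₂t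 + h₃v₁ + h₄v₂ − e₃w₁ − e₄w₂; v₂w₁ = (1/2)e₁·1 − h₂t − e₃v₁ − e₄v₂ + h₃w₁ + h₄w₂; v₂w₂ = (1/2)f₁·1 − f₃v₁ − f₄v₂ − f₃w₁ − f₄w₂; w₁² = d₁·1 − 2d₃v₁ − 2d₄v₂ + d₃w₁ + d₄w₂; w₁w₂ = e₁·1 − 2e₃v₁ − 2e₄v₂ + e₃w₁ + e₄w₂; w₂² = f₁·1 − 2f₃v₁ − 2f₄v₂ + f₃w₁ + f₄w₂. -/

import Mathlib

noncomputable section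

/-- A fixed 3-cycle in `S₃ = Equiv.Perm (Fin 3)` (it sends `0 ↦ 1 ↦ 2 ↦ 0`). -/
def σ : Equiv.Perm (Fin 3) := finRotate 3

/-- A fixed transposition in `S₃ = Equiv.Perm (Fin 3)`; it satisfies `τ * σ * τ⁻¹ = σ ^ 2`. -/
def τ : Equiv.Perm (Fin 3) := Equiv.swap 0 1

/-- The standard basis of the free module `A = Fin 6 → B`, with the labelling
`E 0 = 1`, `E 1 = t`, `E 2 = v₁`, `E 3 = v₂`, `E 4 = w₁ (= τv₁)`, `E 5 = w₂ (= τv₂)`. -/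
def E (B : Type*) [CommRing B] (i : Fin 6) : Fin 6 → B := Pi.single i 1

/-!
As an `S₃`-module `A = 1 ⊕ sgn ⊕ V ⊕ V`, where each pair `(vᵢ, wᵢ)` spans a copy of the standard
representation `V`. Equivariance of the multiplication turns each family of products (`t²`;
`(tvᵢ, twᵢ)`; `(vᵢvⱼ, wᵢwⱼ, vᵢwⱼ, vⱼwᵢ)`) into linear relations under `σ` and `τ`, which in
coordinates are solved by dividing by `2` and `3`: `t²` is invariant, hence a multiple of `1`;
`(tvᵢ, twᵢ)` spans a copy of `sgn ⊗ V ≅ V`; and the products of two copies of `V` are determined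
by the coordinates of `vᵢvⱼ` together with those of `vᵢwⱼ` along `t, v₁, v₂`.
-/

section Coordinates

variable {B : Type*} [CommRing B]

/-- The actions of `σ` and `τ` in the coordinates of the basis `E`. -/
def sigmaLin : (Fin 6 → B) →ₗ[B] (Fin 6 → B) where
  toFun P := ![P 0, P 1, P 4, P 5, -P 2 - P 4, -P 3 - P 5]
  map_add' P Q := by ext k; fin_cases k <;> simp <;> ring
  map_smul' c P := by ext k; fin_cases k <;> simp <;> ring

def tauLin : (Fin 6 → B) →ₗ[B] (Fin 6 → B) where
  toFun P := ![P 0, -P 1, P 4, P 5, P 2, P 3]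
  map_add' P Q := by ext k; fin_cases k <;> simp; ring
  map_smul' c P := by ext k; fin_cases k <;> simp

theorem eq_sigmaLin (f : (Fin 6 → B) →ₗ[B] (Fin 6 → B))
    (h0 : f (E B 0) = E B 0) (h1 : f (E B 1) = E B 1) (h2 : f (E B 2) = -E B 4)
    (h3 : f (E B 3) = -E B 5) (h4 : f (E B 4) = E B 2 - E B 4)
    (h5 : f (E B 5) = E B 3 - E B 5) :
    f = sigmaLin :=
  (Pi.basisFun B (Fin 6)).ext fun i => by
    rw [Pi.basisFun_apply, show Pi.single i 1 = E B i from rfl]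
    fin_cases i <;>
      simp only [Fin.zero_eta, Fin.mk_one, Fin.reduceFinMk, h0, h1, h2, h3, h4, h5] <;>
      ext k <;> fin_cases k <;> simp [sigmaLin, E]

theorem eq_tauLin (f : (Fin 6 → B) →ₗ[B] (Fin 6 → B))
    (h0 : f (E B 0) = E B 0) (h1 : f (E B 1) = -E B 1) (h2 : f (E B 2) = E B 4)
    (h3 : f (E B 3) = E B 5) (h4 : f (E B 4) = E B 2) (h5 : f (E B 5) = E B 3) :
    f = tauLin :=
  (Pi.basisFun B (Fin 6)).ext fun i => by
    rw [Pi.basisFun_apply, show Pi.single i 1 = E B i from rfl]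
    fin_cases i <;>
      simp only [Fin.zero_eta, Fin.mk_one, Fin.reduceFinMk, h0, h1, h2, h3, h4, h5] <;>
      ext k <;> fin_cases k <;> simp [tauLin, E]

theorem sigmaLin_eq_iff {P Q : Fin 6 → B} : sigmaLin P = Q ↔
    P 0 = Q 0 ∧ P 1 = Q 1 ∧ P 4 = Q 2 ∧ P 5 = Q 3 ∧ -P 2 - P 4 = Q 4 ∧ -P 3 - P 5 = Q 5 := by
  simp [sigmaLin, funext_iff, Fin.forall_fin_succ]

theorem tauLin_eq_iff {P Q : Fin 6 → B} : tauLin P = Q ↔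
    P 0 = Q 0 ∧ -P 1 = Q 1 ∧ P 4 = Q 2 ∧ P 5 = Q 3 ∧ P 2 = Q 4 ∧ P 3 = Q 5 := by
  simp [tauLin, funext_iff, Fin.forall_fin_succ]

theorem sigmaLin_E_one : sigmaLin (E B 1) = E B 1 := by
  ext k; fin_cases k <;> simp [sigmaLin, E]

theorem tauLin_E_one : tauLin (E B 1) = -E B 1 := by
  ext k; fin_cases k <;> simp [tauLin, E]

/-- `(x, y)` transforms like `(vᵢ, wᵢ)`, i.e. spans a copy of the standard representation. -/
def IsStdPair (x y : Fin 6 → B) : Prop :=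
  sigmaLin x = -y ∧ sigmaLin y = x - y ∧ tauLin x = y ∧ tauLin y = x

theorem isStdPair_E_two_four : IsStdPair (E B 2) (E B 4) := by
  refine ⟨?_, ?_, ?_, ?_⟩ <;> ext k <;> fin_cases k <;> simp [sigmaLin, tauLin, E]

theorem isStdPair_E_three_five : IsStdPair (E B 3) (E B 5) := by
  refine ⟨?_, ?_, ?_, ?_⟩ <;> ext k <;> fin_cases k <;> simp [sigmaLin, tauLin, E]

section Relations

variable {m : (Fin 6 → B) →ₗ[B] (Fin 6 → B) →ₗ[B] (Fin 6 → B)}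
  {t x y x' y' : Fin 6 → B}

theorem sign_mul_self_relations
    (hσm : ∀ x y, sigmaLin (m x y) = m (sigmaLin x) (sigmaLin y))
    (hτm : ∀ x y, tauLin (m x y) = m (tauLin x) (tauLin y))
    (hσt : sigmaLin t = t) (hτt : tauLin t = -t) :
    sigmaLin (m t t) = m t t ∧ tauLin (m t t) = m t t := by
  refine ⟨by rw [hσm, hσt], ?_⟩
  rw [hτm, hτt]
  simp only [map_neg, LinearMap.neg_apply, neg_neg]

theorem sign_mul_stdPair_relations
    (hσm : ∀ x y, sigmaLin (m x y) = m (sigmaLin x) (sigmaLin y))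
    (hτm : ∀ x y, tauLin (m x y) = m (tauLin x) (tauLin y))
    (hσt : sigmaLin t = t) (hτt : tauLin t = -t) (hxy : IsStdPair x y) :
    sigmaLin (m t x) = -m t y ∧ tauLin (m t x) = -m t y ∧
      sigmaLin (m t y) = m t x - m t y := by
  obtain ⟨hσx, hσy, hτx, -⟩ := hxy
  refine ⟨?_, ?_, ?_⟩
  · rw [hσm, hσt, hσx, map_neg]
  · rw [hτm, hτt, hτx, map_neg, LinearMap.neg_apply]
  · rw [hσm, hσt, hσy, map_sub]

theorem IsStdPair.mul_relations
    (hσm : ∀ x y, sigmaLin (m x y) = m (sigmaLin x) (sigmaLin y))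
    (hτm : ∀ x y, tauLin (m x y) = m (tauLin x) (tauLin y))
    (hcomm : ∀ x y, m x y = m y x) (hxy : IsStdPair x y) (hxy' : IsStdPair x' y') :
    sigmaLin (m x x') = m y y' ∧ tauLin (m x x') = m y y' ∧
      tauLin (m x y') = m x' y ∧ sigmaLin (m x y') = m y y' - m x' y := by
  obtain ⟨hσx, hσy, hτx, hτy⟩ := hxy
  obtain ⟨hσx', hσy', hτx', hτy'⟩ := hxy'
  refine ⟨?_, by rw [hτm, hτx, hτx'], by rw [hτm, hτx, hτy', hcomm], ?_⟩
  · rw [hσm, hσx, hσx']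
    simp only [map_neg, LinearMap.neg_apply, neg_neg]
  · rw [hσm, hσx, hσy', hcomm x' y]
    simp only [map_neg, LinearMap.neg_apply, map_sub]
    abel

end Relations

section Invertible6

variable [Invertible (6 : B)]

theorem eq_zero_of_two_mul_eq_zero {x : B} (h : 2 * x = 0) : x = 0 := by
  linear_combination (3 * ⅟(6 : B)) * h - x * mul_invOf_self (6 : B)

theorem eq_zero_of_three_mul_eq_zero {x : B} (h : 3 * x = 0) : x = 0 := by
  linear_combination (2 * ⅟(6 : B)) * h - x * mul_invOf_self (6 : B)

theorem eq_half_of_two_mul_eq {x y : B} (h : 2 * y = x) : y = 3 * ⅟(6 : B) * x := by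
  linear_combination (3 * ⅟(6 : B)) * h - y * mul_invOf_self (6 : B)

theorem eq_smul_E_zero_of_fixed {P : Fin 6 → B} (h : sigmaLin P = P ∧ tauLin P = P) :
    P = P 0 • E B 0 := by
  obtain ⟨-, -, h2, h3, h4, h5⟩ := sigmaLin_eq_iff.mp h.1
  obtain ⟨-, h1, -⟩ := tauLin_eq_iff.mp h.2
  have e1 : P 1 = 0 := eq_zero_of_two_mul_eq_zero (by linear_combination -h1)
  have e2 : P 2 = 0 := eq_zero_of_three_mul_eq_zero (by linear_combination -h4 - 2 * h2)
  have e3 : P 3 = 0 := eq_zero_of_three_mul_eq_zero (by linear_combination -h5 - 2 * h3)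
  ext k; fin_cases k <;> simp [E, e1, e2, e3, h2, h3]

theorem eq_of_sign_mul_stdPair_relations {X Y : Fin 6 → B}
    (h : sigmaLin X = -Y ∧ tauLin X = -Y ∧ sigmaLin Y = X - Y) :
    X = X 2 • E B 2 + X 3 • E B 3 - (2 * X 2) • E B 4 - (2 * X 3) • E B 5 ∧
    Y = (2 * X 2) • E B 2 + (2 * X 3) • E B 3 - X 2 • E B 4 - X 3 • E B 5 := by
  obtain ⟨hσX, hτX, hσY⟩ := h
  obtain ⟨a0, a1, a2, a3, a4, a5⟩ := sigmaLin_eq_iff.mp hσX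
  obtain ⟨-, b1, -, -, b4, b5⟩ := tauLin_eq_iff.mp hτX
  obtain ⟨c0, -⟩ := sigmaLin_eq_iff.mp hσY
  simp only [Pi.neg_apply, Pi.sub_apply] at *
  have x0 : X 0 = 0 := eq_zero_of_three_mul_eq_zero (by linear_combination -c0 + 2 * a0)
  have x1 : X 1 = 0 := eq_zero_of_two_mul_eq_zero (by linear_combination a1 - b1)
  constructor <;> ext k <;> fin_cases k <;> simp [E] <;> grind

theorem eq_of_stdPair_mul_relations {P Q R S : Fin 6 → B}
    (h : sigmaLin P = Q ∧ tauLin P = Q ∧ tauLin R = S ∧ sigmaLin R = Q - S) :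
    P = P 0 • E B 0 + P 2 • E B 2 + P 3 • E B 3 - (2 * P 2) • E B 4 - (2 * P 3) • E B 5 ∧
    Q = P 0 • E B 0 - (2 * P 2) • E B 2 - (2 * P 3) • E B 3 + P 2 • E B 4 + P 3 • E B 5 ∧
    R = (3 * ⅟(6 : B) * P 0) • E B 0 + R 1 • E B 1 + R 2 • E B 2 + R 3 • E B 3 -
      P 2 • E B 4 - P 3 • E B 5 ∧
    S = (3 * ⅟(6 : B) * P 0) • E B 0 - R 1 • E B 1 - P 2 • E B 2 - P 3 • E B 3 +
      R 2 • E B 4 + R 3 • E B 5 := by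
  obtain ⟨hσP, hτP, hτR, hσR⟩ := h
  obtain ⟨a0, a1, a2, a3, a4, a5⟩ := sigmaLin_eq_iff.mp hσP
  obtain ⟨b0, b1, b2, b3, b4, b5⟩ := tauLin_eq_iff.mp hτP
  obtain ⟨c0, c1, c2, c3, c4, c5⟩ := tauLin_eq_iff.mp hτR
  obtain ⟨d0, -, -, -, d4, d5⟩ := sigmaLin_eq_iff.mp hσR
  simp only [Pi.sub_apply] at d0 d4 d5
  have p1 : P 1 = 0 := eq_zero_of_two_mul_eq_zero (by linear_combination a1 - b1)
  have r0 : R 0 = 3 * ⅟(6 : B) * P 0 := eq_half_of_two_mul_eq (by linear_combination d0 + c0 - a0)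
  refine ⟨?_, ?_, ?_, ?_⟩ <;> ext k <;> fin_cases k <;> simp [E] <;> grind

theorem eq_of_stdPair_mul_self_relations {P Q R : Fin 6 → B}
    (h : sigmaLin P = Q ∧ tauLin P = Q ∧ tauLin R = R ∧ sigmaLin R = Q - R) :
    P = P 0 • E B 0 + P 2 • E B 2 + P 3 • E B 3 - (2 * P 2) • E B 4 - (2 * P 3) • E B 5 ∧
    Q = P 0 • E B 0 - (2 * P 2) • E B 2 - (2 * P 3) • E B 3 + P 2 • E B 4 + P 3 • E B 5 ∧
    R = (3 * ⅟(6 : B) * P 0) • E B 0 - P 2 • E B 2 - P 3 • E B 3 - P 2 • E B 4 -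
      P 3 • E B 5 := by
  obtain ⟨hP, hQ, hR, -⟩ := eq_of_stdPair_mul_relations h
  obtain ⟨-, r1, -, -, r4, r5⟩ := tauLin_eq_iff.mp h.2.2.1
  have r1' : R 1 = 0 := eq_zero_of_two_mul_eq_zero (by linear_combination -r1)
  have r4' := congrFun hR 4
  have r5' := congrFun hR 5
  simp [E] at r4' r5'
  refine ⟨hP, hQ, ?_⟩
  rw [hR, r1', r4, r5, r4', r5']
  module

end Invertible6

end Coordinates

theorem statement2 (B : Type*) [CommRing B] [Invertible (6 : B)]
    (ρ : Equiv.Perm (Fin 3) →* ((Fin 6 → B) ≃ₗ[B] (Fin 6 → B)))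
    (hσ0 : ρ σ (E B 0) = E B 0)
    (hσt : ρ σ (E B 1) = E B 1)
    (hσv1 : ρ σ (E B 2) = -E B 4)
    (hσv2 : ρ σ (E B 3) = -E B 5)
    (hσw1 : ρ σ (E B 4) = E B 2 - E B 4)
    (hσw2 : ρ σ (E B 5) = E B 3 - E B 5)
    (hτ0 : ρ τ (E B 0) = E B 0)
    (hτt : ρ τ (E B 1) = -E B 1)
    (hτv1 : ρ τ (E B 2) = E B 4)
    (hτv2 : ρ τ (E B 3) = E B 5)
    (hτw1 : ρ τ (E B 4) = E B 2)
    (hτw2 : ρ τ (E B 5) = E B 3)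
    (m : (Fin 6 → B) →ₗ[B] (Fin 6 → B) →ₗ[B] (Fin 6 → B))
    (hcomm : ∀ x y, m x y = m y x)
    (hequiv : ∀ (g : Equiv.Perm (Fin 3)) (x y : Fin 6 → B),
      ρ g (m x y) = m (ρ g x) (ρ g y)) :
    ∃ a b₁ b₂ c₁ c₂ d₁ d₃ d₄ e₁ e₃ e₄ f₁ f₃ f₄ h₂ h₃ h₄ : B,
      m (E B 1) (E B 1) = a • E B 0 ∧
      m (E B 1) (E B 2) =
        b₁ • E B 2 + b₂ • E B 3 - (2 * b₁) • E B 4 - (2 * b₂) • E B 5 ∧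
      m (E B 1) (E B 3) =
        c₁ • E B 2 + c₂ • E B 3 - (2 * c₁) • E B 4 - (2 * c₂) • E B 5 ∧
      m (E B 1) (E B 4) =
        (2 * b₁) • E B 2 + (2 * b₂) • E B 3 - b₁ • E B 4 - b₂ • E B 5 ∧
      m (E B 1) (E B 5) =
        (2 * c₁) • E B 2 + (2 * c₂) • E B 3 - c₁ • E B 4 - c₂ • E B 5 ∧
      m (E B 2) (E B 2) =
        d₁ • E B 0 + d₃ • E B 2 + d₄ • E B 3 - (2 * d₃) • E B 4 - (2 * d₄) • E B 5 ∧
      m (E B 2) (E B 3) =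
        e₁ • E B 0 + e₃ • E B 2 + e₄ • E B 3 - (2 * e₃) • E B 4 - (2 * e₄) • E B 5 ∧
      m (E B 3) (E B 3) =
        f₁ • E B 0 + f₃ • E B 2 + f₄ • E B 3 - (2 * f₃) • E B 4 - (2 * f₄) • E B 5 ∧
      m (E B 2) (E B 4) =
        ((3 * ⅟(6 : B)) * d₁) • E B 0 - d₃ • E B 2 - d₄ • E B 3 -
          d₃ • E B 4 - d₄ • E B 5 ∧
      m (E B 2) (E B 5) =
        ((3 * ⅟(6 : B)) * e₁) • E B 0 + h₂ • E B 1 + h₃ • E B 2 + h₄ • E B 3 -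
          e₃ • E B 4 - e₄ • E B 5 ∧
      m (E B 3) (E B 4) =
        ((3 * ⅟(6 : B)) * e₁) • E B 0 - h₂ • E B 1 - e₃ • E B 2 - e₄ • E B 3 +
          h₃ • E B 4 + h₄ • E B 5 ∧
      m (E B 3) (E B 5) =
        ((3 * ⅟(6 : B)) * f₁) • E B 0 - f₃ • E B 2 - f₄ • E B 3 -
          f₃ • E B 4 - f₄ • E B 5 ∧
      m (E B 4) (E B 4) =
        d₁ • E B 0 - (2 * d₃) • E B 2 - (2 * d₄) • E B 3 + d₃ • E B 4 + d₄ • E B 5 ∧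
      m (E B 4) (E B 5) =
        e₁ • E B 0 - (2 * e₃) • E B 2 - (2 * e₄) • E B 3 + e₃ • E B 4 + e₄ • E B 5 ∧
      m (E B 5) (E B 5) =
        f₁ • E B 0 - (2 * f₃) • E B 2 - (2 * f₄) • E B 3 + f₃ • E B 4 + f₄ • E B 5
 := by
  have hσm : ∀ x y, sigmaLin (m x y) = m (sigmaLin x) (sigmaLin y) := by
    rw [← eq_sigmaLin (ρ σ).toLinearMap hσ0 hσt hσv1 hσv2 hσw1 hσw2]
    exact hequiv σ
  have hτm : ∀ x y, tauLin (m x y) = m (tauLin x) (tauLin y) := by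
    rw [← eq_tauLin (ρ τ).toLinearMap hτ0 hτt hτv1 hτv2 hτw1 hτw2]
    exact hequiv τ
  have v₁ : IsStdPair (E B 2) (E B 4) := isStdPair_E_two_four
  have v₂ : IsStdPair (E B 3) (E B 5) := isStdPair_E_three_five
  obtain ⟨htv₁, htw₁⟩ := eq_of_sign_mul_stdPair_relations <|
    sign_mul_stdPair_relations hσm hτm sigmaLin_E_one tauLin_E_one v₁
  obtain ⟨htv₂, htw₂⟩ := eq_of_sign_mul_stdPair_relations <|
    sign_mul_stdPair_relations hσm hτm sigmaLin_E_one tauLin_E_one v₂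
  obtain ⟨hv₁v₁, hw₁w₁, hv₁w₁⟩ := eq_of_stdPair_mul_self_relations <|
    v₁.mul_relations hσm hτm hcomm v₁
  obtain ⟨hv₂v₂, hw₂w₂, hv₂w₂⟩ := eq_of_stdPair_mul_self_relations <|
    v₂.mul_relations hσm hτm hcomm v₂
  obtain ⟨hv₁v₂, hw₁w₂, hv₁w₂, hv₂w₁⟩ := eq_of_stdPair_mul_relations <|
    v₁.mul_relations hσm hτm hcomm v₂
  exact ⟨_, _, _, _, _, _, _, _, _, _, _, _, _, _, _, _, _,
    eq_smul_E_zero_of_fixed (sign_mul_self_relations hσm hτm sigmaLin_E_one tauLin_E_one),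
    htv₁, htv₂, htw₁, htw₂, hv₁v₁, hv₁v₂, hv₂v₂, hv₁w₁, hv₁w₂, hv₂w₁, hv₂w₂, hw₁w₁, hw₁w₂, hw₂w₂⟩
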